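/- arXiv:2405.19704 — 3 statements merged into one kernel-verified Lean document; each statement's English description precedes it below -/
import Mathlib

section
/- The map h : [0,1] → [0,1] defined by h(x) = (2/x²)·√(x⁴ + √(4 − 3x⁴) − 2) for x ∈ (0,1], extended by h(0)=1 (limit value), is a bijection from (0,1] onto [0,1). -/
private lemma aux_inner_nonneg {x : ℝ} (hx0 : 0 < x) (hx1 : x ≤ 1) :
    0 ≤ x ^ 4 + Real.sqrt (4 - 3 * x ^ 4) - 2 := by
  have hx4 : x ^ 4 ≤ 1 := pow_le_one₀ hx0.le hx1
  have h4 : (0:ℝ) ≤ 4 - 3 * x ^ 4 := by nlinarith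
  have hle : 2 - x ^ 4 ≤ Real.sqrt (4 - 3 * x ^ 4) := by
    rw [show (2 - x ^ 4 : ℝ) = Real.sqrt ((2 - x^4)^2) from
      (Real.sqrt_sq (by nlinarith)).symm]
    apply Real.sqrt_le_sqrt
    nlinarith [pow_pos hx0 4]
  linarith

private lemma aux_key {x : ℝ} (hx0 : 0 < x) (hx1 : x ≤ 1) :
    16 * (1 - (2 / x ^ 2 * Real.sqrt (x ^ 4 + Real.sqrt (4 - 3 * x ^ 4) - 2)) ^ 2)
      = x ^ 4 * (4 - (2 / x ^ 2 * Real.sqrt (x ^ 4 + Real.sqrt (4 - 3 * x ^ 4) - 2)) ^ 2) ^ 2 := by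
  have hx4 : x ^ 4 ≤ 1 := pow_le_one₀ hx0.le hx1
  set s := Real.sqrt (4 - 3 * x ^ 4) with hs
  set y := 2 / x ^ 2 * Real.sqrt (x ^ 4 + s - 2) with hy
  have hB : s ^ 2 = 4 - 3 * x ^ 4 := Real.sq_sqrt (by nlinarith)
  have hA : y ^ 2 * x ^ 4 = 4 * (x ^ 4 + s - 2) := by
    have hin : (0:ℝ) ≤ x ^ 4 + s - 2 := aux_inner_nonneg hx0 hx1
    have : y ^ 2 = 4 / x ^ 4 * (x ^ 4 + s - 2) := by
      rw [hy, mul_pow, div_pow, Real.sq_sqrt hin]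
      ring
    rw [this]
    field_simp
  have hxne : x ^ 4 ≠ 0 := pow_ne_zero 4 hx0.ne'
  apply mul_left_cancel₀ hxne
  linear_combination (-(y ^ 2 * x ^ 4 - 4 * x ^ 4 + 8 + 4 * s)) * hA + (-16) * hB

private lemma aux_maps {x : ℝ} (hx0 : 0 < x) (hx1 : x ≤ 1) :
    2 / x ^ 2 * Real.sqrt (x ^ 4 + Real.sqrt (4 - 3 * x ^ 4) - 2) ∈ Set.Ico (0:ℝ) 1 := by
  have hx4 : x ^ 4 ≤ 1 := pow_le_one₀ hx0.le hx1
  have hx4p : 0 < x ^ 4 := pow_pos hx0 4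
  have hx2p : 0 < x ^ 2 := pow_pos hx0 2
  constructor
  · positivity
  · have hB : Real.sqrt (4 - 3 * x ^ 4) ^ 2 = 4 - 3 * x ^ 4 := Real.sq_sqrt (by nlinarith)
    have hs0 : 0 ≤ Real.sqrt (4 - 3 * x ^ 4) := Real.sqrt_nonneg _
    have hslt : Real.sqrt (4 - 3 * x ^ 4) < 2 - 3 * x ^ 4 / 4 := by
      nlinarith [hB, hs0]
    have hlt : Real.sqrt (x ^ 4 + Real.sqrt (4 - 3 * x ^ 4) - 2) < x ^ 2 / 2 := by
      rw [show (x^2/2 : ℝ) = Real.sqrt ((x^2/2)^2) from (Real.sqrt_sq (by positivity)).symm]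
      apply Real.sqrt_lt_sqrt (aux_inner_nonneg hx0 hx1)
      nlinarith
    calc 2 / x ^ 2 * Real.sqrt (x ^ 4 + Real.sqrt (4 - 3 * x ^ 4) - 2)
        < 2 / x ^ 2 * (x ^ 2 / 2) := by
          apply mul_lt_mul_of_pos_left hlt (by positivity)
      _ = 1 := by field_simp

private lemma aux_pow4_inj {x x' : ℝ} (hx : 0 < x) (hx' : 0 < x')
    (h : x ^ 4 = x' ^ 4) : x = x' :=
  (pow_left_strictMonoOn₀ (by norm_num : (4:ℕ) ≠ 0)).injOn hx.le hx'.le h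

/-- The map `h` converting the Bhattacharyya affinity coefficient into the
Hellinger correlation, `h(x) = (2/x²)·√(x⁴ + √(4 − 3x⁴) − 2)` for `x ∈ (0,1]`,
extended by `h(0) = 1`, is a bijection from `(0,1]` onto `[0,1)`. -/
theorem stmt_0 :
    Set.BijOn
      (fun x : ℝ =>
        if x = 0 then 1
        else 2 / x ^ 2 * Real.sqrt (x ^ 4 + Real.sqrt (4 - 3 * x ^ 4) - 2))
      (Set.Ioc 0 1) (Set.Ico 0 1) := by
  refine ⟨?_, ?_, ?_⟩
  · -- MapsTo
    intro x hx
    simp only [if_neg hx.1.ne']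
    exact aux_maps hx.1 hx.2
  · -- InjOn
    intro x hx x' hx' heq
    simp only [if_neg hx.1.ne', if_neg hx'.1.ne'] at heq
    have k1 := aux_key hx.1 hx.2
    have k2 := aux_key hx'.1 hx'.2
    rw [heq] at k1
    set y := 2 / x' ^ 2 * Real.sqrt (x' ^ 4 + Real.sqrt (4 - 3 * x' ^ 4) - 2) with hy
    have hylt : y < 1 := (aux_maps hx'.1 hx'.2).2
    have hy0 : 0 ≤ y := (aux_maps hx'.1 hx'.2).1
    have h4y : (0:ℝ) < 4 - y ^ 2 := by nlinarith
    have hq : (4 - y ^ 2) ^ 2 ≠ 0 := pow_ne_zero 2 h4y.ne'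
    have h4 : x ^ 4 = x' ^ 4 := by
      have := k1.symm.trans k2
      exact mul_right_cancel₀ hq this
    exact aux_pow4_inj hx.1 hx'.1 h4
  · -- SurjOn
    intro y hy
    obtain ⟨hy0, hy1⟩ := hy
    have hq : (0:ℝ) < 4 - y ^ 2 := by nlinarith
    set c := Real.sqrt (1 - y ^ 2) with hc
    have hc2 : c ^ 2 = 1 - y ^ 2 := Real.sq_sqrt (by nlinarith)
    have hc0 : 0 < c := Real.sqrt_pos.2 (by nlinarith)
    set x := Real.sqrt (4 * c / (4 - y ^ 2)) with hxdef
    have hx2 : x ^ 2 = 4 * c / (4 - y ^ 2) := Real.sq_sqrt (by positivity)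
    have hx0 : 0 < x := Real.sqrt_pos.2 (by positivity)
    have hx4 : x ^ 4 = 16 * c ^ 2 / (4 - y ^ 2) ^ 2 := by
      have : x ^ 4 = (x ^ 2) ^ 2 := by ring
      rw [this, hx2, div_pow]
      ring_nf
    have hx1 : x ≤ 1 := by
      have h1 : x ^ 2 ≤ 1 := by
        rw [hx2, div_le_one hq]
        nlinarith
      nlinarith
    refine ⟨x, ⟨hx0, hx1⟩, ?_⟩
    simp only [if_neg hx0.ne']
    have hsq : 4 - 3 * x ^ 4 = (2 * (y ^ 2 + 2) / (4 - y ^ 2)) ^ 2 := by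
      rw [hx4]
      field_simp
      linear_combination (-48 : ℝ) * hc2
    have hs : Real.sqrt (4 - 3 * x ^ 4) = 2 * (y ^ 2 + 2) / (4 - y ^ 2) := by
      rw [hsq]; exact Real.sqrt_sq (by positivity)
    have hinner : x ^ 4 + Real.sqrt (4 - 3 * x ^ 4) - 2 = (2 * y * c / (4 - y ^ 2)) ^ 2 := by
      rw [hs, hx4]
      field_simp
      linear_combination (4 * (4 - y ^ 2)) * hc2
    rw [hinner, Real.sqrt_sq (by positivity), hx2]
    field_simp
    ring_nf
end

section
/- The function h(x) = (2/x²)·√(x⁴ + √(4 − 3x⁴) − 2) is strictly decreasing on (0,1]. -/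
/-- The function `h(x) = (2/x²)·√(x⁴ + √(4 − 3x⁴) − 2)` is strictly
decreasing on `(0,1]`. -/
theorem stmt_2 :
    StrictAntiOn
      (fun x : ℝ => 2 / x ^ 2 * Real.sqrt (x ^ 4 + Real.sqrt (4 - 3 * x ^ 4) - 2))
      (Set.Ioc 0 1) := by
  intro x hx y hy hxy
  obtain ⟨hx0, hx1⟩ := hx
  obtain ⟨hy0, hy1⟩ := hy
  have ha0 : (0:ℝ) < x ^ 4 := by positivity
  have hb0 : (0:ℝ) < y ^ 4 := by positivity
  have hab : x ^ 4 < y ^ 4 := by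
    exact pow_lt_pow_left₀ hxy hx0.le (by norm_num)
  have ha1 : x ^ 4 ≤ 1 := by nlinarith [pow_le_one₀ hx0.le hx1 (n := 4)]
  have hb1 : y ^ 4 ≤ 1 := by nlinarith [pow_le_one₀ hy0.le hy1 (n := 4)]
  set a := x ^ 4 with ha
  set b := y ^ 4 with hb
  set sx := Real.sqrt (4 - 3 * a) with hsx
  set sy := Real.sqrt (4 - 3 * b) with hsy
  have hsx0 : 0 ≤ sx := Real.sqrt_nonneg _
  have hsy0 : 0 ≤ sy := Real.sqrt_nonneg _
  have hsx2 : sx * sx = 4 - 3 * a := Real.mul_self_sqrt (by nlinarith)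
  have hsy2 : sy * sy = 4 - 3 * b := Real.mul_self_sqrt (by nlinarith)
  have hlt : sy < sx := by
    apply Real.sqrt_lt_sqrt (by nlinarith)
    nlinarith
  -- insides are nonnegative
  have insx : 0 ≤ a + sx - 2 := by nlinarith [mul_pos ha0 (sub_pos.2 (show a < 4 by nlinarith))]
  have insy : 0 ≤ b + sy - 2 := by nlinarith
  have hHx0 : 0 ≤ 2 / x ^ 2 * Real.sqrt (a + sx - 2) := by positivity
  have hHy0 : 0 ≤ 2 / y ^ 2 * Real.sqrt (b + sy - 2) := by positivity
  have hx2 : (x ^ 2) ^ 2 = a := by rw [ha]; ring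
  have hy2 : (y ^ 2) ^ 2 = b := by rw [hb]; ring
  have hx2pos : (0:ℝ) < x ^ 2 := by positivity
  have hy2pos : (0:ℝ) < y ^ 2 := by positivity
  have hsqx : (2 / x ^ 2 * Real.sqrt (a + sx - 2)) ^ 2 = 4 / a * (a + sx - 2) := by
    rw [mul_pow, div_pow, Real.sq_sqrt insx, hx2]
    norm_num
  have hsqy : (2 / y ^ 2 * Real.sqrt (b + sy - 2)) ^ 2 = 4 / b * (b + sy - 2) := by
    rw [mul_pow, div_pow, Real.sq_sqrt insy, hy2]
    norm_num
  have h1 : (sy - 2) * (sy + 2) = -3 * b := by linear_combination hsy2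
  have h2 : (sx - 2) * (sx + 2) = -3 * a := by linear_combination hsx2
  have hpos : (0:ℝ) < (sy + 2) * (sx + 2) := by positivity
  have e1 : a * (sy - 2) * ((sy + 2) * (sx + 2)) = -3 * a * b * (sx + 2) := by
    linear_combination a * (sx + 2) * h1
  have e2 : b * (sx - 2) * ((sy + 2) * (sx + 2)) = -3 * a * b * (sy + 2) := by
    linear_combination b * (sy + 2) * h2
  have hmid : -3 * a * b * (sx + 2) < -3 * a * b * (sy + 2) := by
    nlinarith [mul_pos (mul_pos ha0 hb0) (sub_pos.2 hlt)]
  have key : a * (sy - 2) < b * (sx - 2) := by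
    refine lt_of_mul_lt_mul_right ?_ hpos.le
    rw [e1, e2]; exact hmid
  have hsq : (2 / y ^ 2 * Real.sqrt (b + sy - 2)) ^ 2
      < (2 / x ^ 2 * Real.sqrt (a + sx - 2)) ^ 2 := by
    rw [hsqx, hsqy, div_mul_eq_mul_div, div_mul_eq_mul_div, div_lt_div_iff₀ hb0 ha0]
    linarith [key]
  have := lt_of_pow_lt_pow_left₀ 2 hHx0 hsq
  simpa using this
end

section
/- If ρ ∈ [−1,1] and B = 2(1−ρ²)^{1/4}/(4−ρ²)^{1/2}, then |ρ| = (2/B²)·√(B⁴ + √(4 − 3B⁴) − 2). -/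
/-- For a bivariate normal with correlation `ρ` (with `|ρ| < 1`, so that `B > 0`),
the Hellinger correlation formula recovers `|ρ|` from the Bhattacharyya affinity
coefficient `B = 2(1−ρ²)^{1/4}/(4−ρ²)^{1/2}`. -/
theorem stmt_3 (ρ : ℝ) (hρ : ρ ∈ Set.Ioo (-1 : ℝ) 1)
    (B : ℝ) (hB : B = 2 * (1 - ρ ^ 2) ^ ((1 : ℝ) / 4) / Real.sqrt (4 - ρ ^ 2)) :
    |ρ| = 2 / B ^ 2 * Real.sqrt (B ^ 4 + Real.sqrt (4 - 3 * B ^ 4) - 2) := by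
  obtain ⟨h1, h2⟩ := hρ
  have hs1 : (0:ℝ) < 1 - ρ ^ 2 := by nlinarith
  have hs4 : (0:ℝ) < 4 - ρ ^ 2 := by nlinarith
  set t : ℝ := (1 - ρ ^ 2) ^ ((1 : ℝ) / 4) with ht
  have htpos : 0 < t := Real.rpow_pos_of_pos hs1 _
  have ht4 : t ^ 4 = 1 - ρ ^ 2 := by
    rw [ht, ← Real.rpow_natCast (((1 - ρ ^ 2)) ^ ((1:ℝ)/4)) 4,
      ← Real.rpow_mul hs1.le]
    norm_num
  have hsq : Real.sqrt (4 - ρ ^ 2) ^ 2 = 4 - ρ ^ 2 := Real.sq_sqrt hs4.le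
  have hsqpos : 0 < Real.sqrt (4 - ρ ^ 2) := Real.sqrt_pos.mpr hs4
  have hB2 : B ^ 2 = 4 * t ^ 2 / (4 - ρ ^ 2) := by
    rw [hB]; rw [div_pow]; rw [hsq]; ring
  have hB4 : B ^ 4 = 16 * (1 - ρ ^ 2) / (4 - ρ ^ 2) ^ 2 := by
    have : B ^ 4 = (B ^ 2) ^ 2 := by ring
    rw [this, hB2, div_pow, ← ht4]; ring_nf
  have hA : Real.sqrt (4 - 3 * B ^ 4) = 2 * (ρ ^ 2 + 2) / (4 - ρ ^ 2) := by
    have h : 4 - 3 * B ^ 4 = (2 * (ρ ^ 2 + 2) / (4 - ρ ^ 2)) ^ 2 := by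
      rw [hB4]; field_simp; ring
    rw [h, Real.sqrt_sq (by positivity)]
  have hC : B ^ 4 + Real.sqrt (4 - 3 * B ^ 4) - 2
      = (2 * |ρ| * t ^ 2 / (4 - ρ ^ 2)) ^ 2 := by
    rw [hA, hB4]
    have key : (2 * |ρ| * t ^ 2 / (4 - ρ ^ 2)) ^ 2
        = 4 * (ρ ^ 2 * (1 - ρ ^ 2)) / (4 - ρ ^ 2) ^ 2 := by
      rw [div_pow, mul_pow, mul_pow, sq_abs, ← ht4]; ring
    rw [key]
    field_simp
    ring
  rw [hC, Real.sqrt_sq (by positivity), hB2]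
  field_simp
  ring
end
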